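/- (Generating function for one-row multiparameter Q-functions) Let a = (a_k) with a_1 = 0. Then ∑_{r=0}^∞ Q_{(r);a}(x_1,…,x_n) / ∏_{j=2}^{r+1}(u−a_j) = ∏_{j=1}^n (u+x_j)/(u−x_j), as an identity of formal power series in 1/u (or in the variables x) for each finite n. -/

import Mathlib

noncomputable section

abbrev K (n : ℕ) : Type := FractionRing (MvPolynomial (Fin n) ℂ)

def Xv {n : ℕ} (i : Fin n) : K n :=
  algebraMap (MvPolynomial (Fin n) ℂ) (K n) (MvPolynomial.X i)

def Cv {n : ℕ} (c : ℂ) : K n :=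
  algebraMap (MvPolynomial (Fin n) ℂ) (K n) (MvPolynomial.C c)

/-- The product over pairs `i < j` with `i < l` of `(x i + x j)/(x i - x j)`. -/
def ratioProd {n : ℕ} (l : ℕ) (x : Fin n → K n) : K n :=
  ∏ p ∈ Finset.univ.filter (fun p : Fin n × Fin n => (p.1 : ℕ) < l ∧ p.1 < p.2),
    (x p.1 + x p.2) / (x p.1 - x p.2)


/-- The one-row multiparameter Schur P-polynomial `P_{(r);a|n}` (zero if `n = 0`). -/
def Prow (a : ℕ → ℂ) (r n : ℕ) : K n :=
  if h : 1 ≤ n then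
    Cv (((n - 1).factorial : ℂ))⁻¹ *
      ∑ ω : Equiv.Perm (Fin n),
        (∏ k ∈ Finset.range r, (Xv (ω ⟨0, h⟩) - Cv (a (k + 1)))) *
          ratioProd 1 (fun j => Xv (ω j))
  else 0

/-- The one-row multiparameter Schur Q-polynomial: `Q_{(0);a} = 1`,
`Q_{(r);a} = 2 P_{(r);a}` for `r ≥ 1`. -/
def Qrow (a : ℕ → ℂ) (r n : ℕ) : K n :=
  if r = 0 then 1 else 2 * Prow a r n

/-! In the variable `y = 1/u`, partial fractions give
`∏ⱼ (1 + xⱼ y)/(1 - xⱼ y) = 1 + 2 ∑ᵢ cᵢ (1/(1 - xᵢ y) - 1)` with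
`cᵢ = ∏_{j ≠ i} (xᵢ + xⱼ)/(xᵢ - xⱼ)`: after clearing denominators both sides are polynomials of
degree `≤ n` which agree at the `n + 1` points `y = 0` and `y = 1/xᵢ`.
Summing over the permutations by the image of `1` gives `P_{(r);a} = ∑ᵢ cᵢ (xᵢ|a)^r`, so it remains
to expand each `1/(1 - xᵢ y)` in the Newton basis `y^r / ∏_{j=2}^{r+1} (1 - aⱼ y)`. With `a₁ = 0`
the coefficients are `(xᵢ|a)^r`: the partial sums telescope, and the error after `N` terms is
divisible by `y^N`. -/

open Finset

section PartialFractions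

variable {F ι : Type*} [Field F] [Fintype ι] [DecidableEq ι]

def partialFractionCoeff (x : ι → F) (i : ι) : F :=
  ∏ j ∈ univ.erase i, (x i + x j) / (x i - x j)

lemma partialFractionCoeff_comp_perm (x : ι → F) (σ : Equiv.Perm ι) (i : ι) :
    partialFractionCoeff (x ∘ σ) i = partialFractionCoeff x (σ i) :=
  prod_equiv σ (by simp) (by simp)

section Polynomial

open Polynomial

omit [Fintype ι] [DecidableEq ι] in
lemma Polynomial.natDegree_prod_le_card {R : Type*} [CommSemiring R] {s : Finset ι}
    {f : ι → R[X]} (h : ∀ j ∈ s, (f j).natDegree ≤ 1) : (∏ j ∈ s, f j).natDegree ≤ #s :=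
  (natDegree_prod_le _ _).trans (by simpa using sum_le_card_nsmul s _ 1 h)

lemma prod_one_add_C_mul_X_eq_partialFraction (x : ι → F) (hx : ∀ i, x i ≠ 0)
    (hinj : Function.Injective x) :
    ∏ j, (1 + C (x j) * X) = ∏ j, (1 - C (x j) * X) +
      ∑ i, C (2 * x i * partialFractionCoeff x i) * X * ∏ j ∈ univ.erase i, (1 - C (x j) * X) := by
  have hpts : Function.Injective fun o : Option ι => o.elim 0 fun i => (x i)⁻¹ := by
    rintro (_ | i) (_ | j) h <;> simp_all [hinj.eq_iff]
  refine eq_of_natDegree_lt_card_of_eval_eq _ _ hpts ?_ ?_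
  · rintro (_ | i)
    · simp [eval_prod, eval_finsetSum]
    have hxi : x i * (x i)⁻¹ = 1 := mul_inv_cancel₀ (hx i)
    have hvanish : ∀ s : Finset ι, i ∈ s → ∏ j ∈ s, (1 - x j * (x i)⁻¹) = 0 :=
      fun s hi => prod_eq_zero hi (by rw [hxi, sub_self])
    have hfactor : ∀ j ∈ univ.erase i,
        (x i + x j) / (x i - x j) * (1 - x j * (x i)⁻¹) = 1 + x j * (x i)⁻¹ := by
      intro j hj
      have : x i - x j ≠ 0 := sub_ne_zero.2 (hinj.ne (ne_of_mem_erase hj).symm)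
      have := hx i
      field_simp
    simp only [Option.elim, eval_add, eval_prod, eval_finsetSum, eval_mul, eval_sub, eval_one,
      eval_C, eval_X]
    rw [hvanish univ (mem_univ i), zero_add, sum_eq_single i (fun k _ hk => mul_eq_zero_of_right _
        (hvanish _ (mem_erase.2 ⟨fun h => hk h.symm, mem_univ i⟩))) (by simp),
      ← mul_prod_erase univ _ (mem_univ i), ← prod_congr rfl hfactor, prod_mul_distrib,
      partialFractionCoeff, hxi]
    linear_combination (-2 * (∏ j ∈ univ.erase i, (x i + x j) / (x i - x j)) *
      ∏ j ∈ univ.erase i, (1 - x j * (x i)⁻¹)) * hxi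
  · have hlin : ∀ c : F, (1 + C c * X).natDegree ≤ 1 ∧ (1 - C c * X).natDegree ≤ 1 :=
      fun c => ⟨by compute_degree, by compute_degree⟩
    have hterm : ∀ i, (C (2 * x i * partialFractionCoeff x i) * X *
        ∏ j ∈ univ.erase i, (1 - C (x j) * X)).natDegree ≤ Fintype.card ι := by
      intro i
      refine natDegree_mul_le.trans ?_
      have h1 : (C (2 * x i * partialFractionCoeff x i) * X).natDegree ≤ 1 := by compute_degree
      have h2 := natDegree_prod_le_card fun j (_ : j ∈ univ.erase i) => (hlin (x j)).2
      rw [card_erase_of_mem (mem_univ i), card_univ] at h2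
      have := Fintype.card_pos_iff.2 ⟨i⟩
      omega
    have hL := natDegree_prod_le_card fun j (_ : j ∈ univ) => (hlin (x j)).1
    have hR := (natDegree_add_le _ _).trans (max_le
      (natDegree_prod_le_card fun j (_ : j ∈ univ) => (hlin (x j)).2)
      (natDegree_sum_le_of_forall_le univ _ fun i _ => hterm i))
    simp only [card_univ] at hL hR
    simp only [Fintype.card_option]
    omega

end Polynomial

open PowerSeries

omit [Fintype ι] [DecidableEq ι] in
lemma one_sub_C_mul_X_mul_inv (c : F) : (1 - C c * X) * (1 - C c * X)⁻¹ = 1 :=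
  PowerSeries.mul_inv_cancel _ (by simp)

omit [Fintype ι] [DecidableEq ι] in
lemma prod_one_sub_C_mul_X_mul_prod_inv (s : Finset ι) (x : ι → F) :
    (∏ j ∈ s, (1 - C (x j) * X)) * ∏ j ∈ s, (1 - C (x j) * X)⁻¹ = 1 := by
  rw [← prod_mul_distrib, prod_congr rfl fun j _ => one_sub_C_mul_X_mul_inv (x j), prod_const_one]

lemma prod_one_add_mul_inv_one_sub_eq_partialFraction (x : ι → F) (hx : ∀ i, x i ≠ 0)
    (hinj : Function.Injective x) :
    ∏ j, (1 + C (x j) * X) * (1 - C (x j) * X)⁻¹ =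
      1 + ∑ i, C (2 * partialFractionCoeff x i) * ((1 - C (x i) * X)⁻¹ - 1) := by
  have hpoly := congrArg (Polynomial.coeToPowerSeries.ringHom (R := F))
    (prod_one_add_C_mul_X_eq_partialFraction x hx hinj)
  simp only [map_prod, map_sum, map_mul, map_add, map_sub, map_one,
    Polynomial.coeToPowerSeries.ringHom_apply, Polynomial.coe_C, Polynomial.coe_X] at hpoly
  have hcancel : ∀ i, (∏ j ∈ univ.erase i, (1 - C (x j) * X)) * ∏ j, (1 - C (x j) * X)⁻¹ =
      (1 - C (x i) * X)⁻¹ := fun i => by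
    rw [← mul_prod_erase univ _ (mem_univ i), mul_left_comm, prod_one_sub_C_mul_X_mul_prod_inv,
      mul_one]
  rw [prod_mul_distrib, hpoly, add_mul, prod_one_sub_C_mul_X_mul_prod_inv, sum_mul]
  refine congrArg (1 + ·) (sum_congr rfl fun i _ => ?_)
  simp only [map_mul, map_ofNat]
  linear_combination (2 * C (x i) * C (partialFractionCoeff x i) * X) * hcancel i -
    (2 * C (partialFractionCoeff x i)) * one_sub_C_mul_X_mul_inv (x i)

end PartialFractions

section NewtonSeries

open PowerSeries

variable {F : Type*} [Field F]

/-- `1 / (u|τb)^r = 1 / ∏_{j=2}^{r+1} (u - b j)`, written in `X = 1/u`. -/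
def shiftedPowInv (b : ℕ → F) (r : ℕ) : F⟦X⟧ :=
  X ^ r * ∏ j ∈ Icc 2 (r + 1), (1 - C (b j) * X)⁻¹

lemma shiftedPowInv_zero (b : ℕ → F) : shiftedPowInv b 0 = 1 := by
  simp [shiftedPowInv]

lemma shiftedPowInv_succ (b : ℕ → F) (r : ℕ) :
    shiftedPowInv b (r + 1) = shiftedPowInv b r * X * (1 - C (b (r + 2)) * X)⁻¹ := by
  rw [shiftedPowInv, shiftedPowInv, prod_Icc_succ_top (by omega : 2 ≤ r + 1 + 1), pow_succ]
  ring

lemma inv_one_sub_sub_sum_newton (x : F) (b : ℕ → F) (hb : b 1 = 0) (N : ℕ) :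
    (1 - C x * X)⁻¹ - ∑ r ∈ range N, C (∏ k ∈ range r, (x - b (k + 1))) * shiftedPowInv b r =
      C (∏ k ∈ range N, (x - b (k + 1))) * shiftedPowInv b N * (1 - C (b (N + 1)) * X) *
        (1 - C x * X)⁻¹ := by
  induction N with
  | zero => simp [hb, shiftedPowInv_zero]
  | succ N ih =>
    rw [sum_range_succ, ← sub_sub, ih, shiftedPowInv_succ, prod_range_succ, map_mul, map_sub,
      show N + 1 + 1 = N + 2 from rfl]
    linear_combination (C (∏ k ∈ range N, (x - b (k + 1))) * shiftedPowInv b N) *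
        one_sub_C_mul_X_mul_inv x -
      (C (∏ k ∈ range N, (x - b (k + 1))) * (C x - C (b (N + 1))) * shiftedPowInv b N * X *
        (1 - C x * X)⁻¹) * one_sub_C_mul_X_mul_inv (b (N + 2))

lemma X_pow_dvd_inv_one_sub_sub_sum_newton (x : F) (b : ℕ → F) (hb : b 1 = 0) (N : ℕ) :
    X ^ N ∣ (1 - C x * X)⁻¹ -
      ∑ r ∈ range N, C (∏ k ∈ range r, (x - b (k + 1))) * shiftedPowInv b r := by
  rw [inv_one_sub_sub_sum_newton x b hb N, shiftedPowInv]
  exact (((dvd_mul_right _ _).mul_left _).mul_right _).mul_right _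

end NewtonSeries

section SchurQ

open PowerSeries

lemma Xv_injective {n : ℕ} : Function.Injective (Xv (n := n)) := fun _ _ h =>
  MvPolynomial.X_injective (IsFractionRing.injective (MvPolynomial (Fin n) ℂ) (K n) h)

lemma Xv_ne_zero {n : ℕ} (i : Fin n) : Xv i ≠ 0 :=
  (map_ne_zero_iff _ (IsFractionRing.injective (MvPolynomial (Fin n) ℂ) (K n))).2
    (MvPolynomial.X_ne_zero i)

lemma sum_perm_apply_zero {M : Type*} [AddCommMonoid M] (m : ℕ) (f : Fin (m + 1) → M) :
    ∑ σ : Equiv.Perm (Fin (m + 1)), f (σ 0) = m.factorial • ∑ i, f i := by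
  rw [← Equiv.sum_comp Equiv.Perm.decomposeFin.symm, Fintype.sum_prod_type]
  simp [Equiv.Perm.decomposeFin_symm_apply_zero, smul_sum, Fintype.card_perm]

lemma ratioProd_one {m : ℕ} (x : Fin (m + 1) → K (m + 1)) :
    ratioProd 1 x = partialFractionCoeff x 0 := by
  rw [ratioProd, partialFractionCoeff, prod_filter, Fintype.prod_prod_type, Fin.prod_univ_succ]
  simp only [Fin.val_zero, Nat.lt_one_iff, true_and, Fin.val_succ, Nat.add_one_ne_zero, false_and,
    if_false, prod_const_one, mul_one]
  rw [← prod_filter]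
  congr 1
  ext j
  simp [Fin.pos_iff_ne_zero]

lemma Prow_eq_sum (a : ℕ → ℂ) (r n : ℕ) :
    Prow a r n = ∑ i, partialFractionCoeff Xv i * ∏ k ∈ range r, (Xv i - Cv (a (k + 1))) := by
  cases n with
  | zero => simp [Prow]
  | succ m =>
    have hfact : Cv ((m.factorial : ℂ)⁻¹) * (m.factorial : K (m + 1)) = 1 := by
      rw [Cv, ← map_natCast (algebraMap (MvPolynomial (Fin (m + 1)) ℂ) (K (m + 1))), ← map_mul,
        ← map_natCast MvPolynomial.C, ← map_mul,
        inv_mul_cancel₀ (by exact_mod_cast m.factorial_ne_zero), map_one, map_one]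
    rw [Prow, dif_pos (Nat.le_add_left 1 m)]
    change Cv _ * ∑ ω : Equiv.Perm (Fin (m + 1)), (∏ k ∈ range r, (Xv (ω 0) - _)) *
      ratioProd 1 (Xv ∘ ω) = _
    simp only [ratioProd_one, partialFractionCoeff_comp_perm]
    rw [sum_perm_apply_zero m (fun i => (∏ k ∈ range r, (Xv i - Cv (a (k + 1)))) *
      partialFractionCoeff Xv i), nsmul_eq_mul, ← mul_assoc, Nat.add_sub_cancel, hfact, one_mul]
    simp only [mul_comm]

lemma Qrow_succ (a : ℕ → ℂ) (r n : ℕ) :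
    Qrow a (r + 1) n =
      ∑ i, 2 * partialFractionCoeff Xv i * ∏ k ∈ range (r + 1), (Xv i - Cv (a (k + 1))) := by
  rw [Qrow, if_neg r.succ_ne_zero, Prow_eq_sum, mul_sum]
  simp only [mul_assoc]

lemma sum_range_Qrow_mul (a : ℕ → ℂ) (n N : ℕ) (s : ℕ → (K n)⟦X⟧) (hs : s 0 = 1) :
    ∑ r ∈ range (N + 1), C (Qrow a r n) * s r =
      1 + ∑ i, C (2 * partialFractionCoeff Xv i) *
        (∑ r ∈ range (N + 1), C (∏ k ∈ range r, (Xv i - Cv (a (k + 1)))) * s r - 1) := by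
  simp only [sum_range_succ' _ N, Qrow_succ, hs, prod_range_zero, map_one, mul_one,
    add_sub_cancel_right]
  rw [Qrow, if_pos rfl, map_one, add_comm]
  simp only [map_sum, map_mul, sum_mul, mul_sum]
  rw [sum_comm]
  simp only [mul_assoc]

end SchurQ

/-- Here `1/(u - a) = y (1 - a y)⁻¹` and `(u + x)/(u - x) = (1 + x y)(1 - x y)⁻¹` in `y = 1/u`; the
`r`-th summand is divisible by `y^r`, so the `d`-th coefficient only involves `r ≤ d`. -/
theorem Qrow_generating_function (a : ℕ → ℂ) (ha : a 1 = 0) (n d : ℕ) :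
    (PowerSeries.coeff (R := K n) d)
        (∏ j : Fin n,
          (1 + PowerSeries.C (R := K n) (Xv j) * PowerSeries.X) *
            (1 - PowerSeries.C (R := K n) (Xv j) * PowerSeries.X)⁻¹)
      = ∑ r ∈ Finset.range (d + 1),
          (PowerSeries.coeff (R := K n) d)
            (PowerSeries.C (R := K n) (Qrow a r n) * PowerSeries.X ^ r *
              ∏ j ∈ Finset.Icc 2 (r + 1),
                (1 - PowerSeries.C (R := K n) (Cv (a j)) * PowerSeries.X)⁻¹) := by
  have hb : Cv (n := n) (a 1) = 0 := by rw [ha, Cv, map_zero, map_zero]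
  have hterm : ∀ r, PowerSeries.C (Qrow a r n) * PowerSeries.X ^ r *
      ∏ j ∈ Icc 2 (r + 1), (1 - PowerSeries.C (Cv (a j)) * PowerSeries.X)⁻¹ =
      PowerSeries.C (Qrow a r n) * shiftedPowInv (fun j => Cv (a j)) r := fun r => mul_assoc _ _ _
  rw [← map_sum, ← sub_eq_zero, ← map_sub]
  refine PowerSeries.X_pow_dvd_iff.mp ?_ d (Nat.lt_add_one d)
  rw [sum_congr rfl fun r _ => hterm r,
    prod_one_add_mul_inv_one_sub_eq_partialFraction Xv Xv_ne_zero Xv_injective,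
    sum_range_Qrow_mul a n d _ (shiftedPowInv_zero _), add_sub_add_left_eq_sub, ← sum_sub_distrib]
  refine dvd_sum fun i _ => ?_
  rw [← mul_sub, sub_sub_sub_cancel_right]
  exact dvd_mul_of_dvd_right
    (X_pow_dvd_inv_one_sub_sub_sum_newton (Xv i) (fun j => Cv (a j)) hb (d + 1)) _

end
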